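/- There exist degradable CPT channels Φ: M_{d_A} → M_{d_B} whose minimal environment dimension (Choi rank) d_E exceeds d_B. Specifically, if N: M_d → M_d has Choi rank d², then Φ(ρ) = ½|0⟩⟨0|⊗ρ + ½|1⟩⟨1|⊗N(ρ) is degradable with output dimension d_B = 2d and Choi rank d_E = d²+1 > 2d when d ≥ 3. -/

import Mathlib

open Matrix Kronecker BigOperators ComplexOrder

noncomputable def krausMap {n m ι : Type*} [Fintype n] [Fintype ι]
    (A : ι → Matrix m n ℂ) : Matrix n n ℂ →ₗ[ℂ] Matrix m m ℂ where
  toFun ρ := ∑ k, A k * ρ * (A k)ᴴ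
  map_add' ρ σ := by
    simp [Matrix.mul_add, Matrix.add_mul, Finset.sum_add_distrib]
  map_smul' c ρ := by
    simp [Matrix.mul_smul, Matrix.smul_mul, Finset.smul_sum]

noncomputable def complementMap {n m ι : Type*} [Fintype n] [Fintype m] [Fintype ι]
    (A : ι → Matrix m n ℂ) : Matrix n n ℂ →ₗ[ℂ] Matrix ι ι ℂ where
  toFun ρ := Matrix.of fun j k => (A j * ρ * (A k)ᴴ).trace
  map_add' ρ σ := by
    ext j k
    simp [Matrix.mul_add, Matrix.add_mul]
  map_smul' c ρ := by
    ext j k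
    simp [Matrix.mul_smul, Matrix.smul_mul]

noncomputable def choi {n m : Type*} [Fintype n] [DecidableEq n]
    (Φ : Matrix n n ℂ →ₗ[ℂ] Matrix m m ℂ) : Matrix (n × m) (n × m) ℂ :=
  Matrix.of fun p q => Φ (Matrix.single p.1 q.1 1) p.2 q.2

def IsCPTP {n m : Type*} [Fintype n] [DecidableEq n] [Fintype m]
    (Φ : Matrix n n ℂ →ₗ[ℂ] Matrix m m ℂ) : Prop :=
  (choi Φ).PosSemidef ∧ ∀ ρ, (Φ ρ).trace = ρ.trace

def IsKrausRep {n m ι : Type*} [Fintype n] [DecidableEq n] [Fintype m] [Fintype ι]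
    (A : ι → Matrix m n ℂ) (Φ : Matrix n n ℂ →ₗ[ℂ] Matrix m m ℂ) : Prop :=
  (∀ ρ, Φ ρ = ∑ k, A k * ρ * (A k)ᴴ) ∧ ∑ k, (A k)ᴴ * A k = 1

def Degradable {n m : Type*} [Fintype n] [DecidableEq n] [Fintype m] [DecidableEq m]
    (Φ : Matrix n n ℂ →ₗ[ℂ] Matrix m m ℂ) : Prop :=
  ∃ (e : ℕ) (A : Fin e → Matrix m n ℂ), IsKrausRep A Φ ∧
    ∃ Ψ : Matrix m m ℂ →ₗ[ℂ] Matrix (Fin e) (Fin e) ℂ,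
      IsCPTP Ψ ∧ Ψ ∘ₗ Φ = complementMap A

def AntiDegradable {n m : Type*} [Fintype n] [DecidableEq n] [Fintype m] [DecidableEq m]
    (Φ : Matrix n n ℂ →ₗ[ℂ] Matrix m m ℂ) : Prop :=
  ∃ (e : ℕ) (A : Fin e → Matrix m n ℂ), IsKrausRep A Φ ∧
    ∃ Λ : Matrix (Fin e) (Fin e) ℂ →ₗ[ℂ] Matrix m m ℂ,
      IsCPTP Λ ∧ Λ ∘ₗ complementMap A = Φ

/-- Kraus operators of the flagged channel `Φ(ρ) = ½|0⟩⟨0|⊗ρ + ½|1⟩⟨1|⊗N(ρ)`. -/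
noncomputable def bigA {d f : ℕ} (B : Fin f → Matrix (Fin d) (Fin d) ℂ) :
    Fin (f + 1) → Matrix (Fin 2 × Fin d) (Fin d) ℂ :=
  Fin.cases
    (Matrix.of fun p j => if p.1 = 0 ∧ p.2 = j then (Real.sqrt 2 : ℂ)⁻¹ else 0)
    (fun k => Matrix.of fun p j => if p.1 = 1 then (Real.sqrt 2 : ℂ)⁻¹ * B k p.2 j else 0)

/-!
Write `F₀, F₁` for the isometries `|0⟩ ⊗ 𝟙, |1⟩ ⊗ 𝟙`. With the Kraus family `bigA B`, the flagged
channel is `Φ(ρ) = ½ (F₀ ρ F₀ᴴ + F₁ N(ρ) F₁ᴴ)` and its complement is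
`Φᶜ(ρ) = ½ (tr ρ ⊕ Nᶜ(ρ))`. Both summands of `Φᶜ(ρ)` can be recomputed from `Φ(ρ)`: the `|1⟩` block
has trace `½ tr ρ` because `N` is trace preserving, and `Nᶜ` applied to the `|0⟩` block gives
`½ Nᶜ(ρ)`. As `Nᶜ` is itself a Kraus map, this defines a channel `Ψ` with `Ψ ∘ Φ = Φᶜ`.

The Choi matrix of a Kraus map is the Gram matrix of its (conjugated, flattened) Kraus operators, so
its rank is the number of Kraus operators when these are linearly independent. The `d² + 1`
operators of `Φ` are linearly independent: left multiplication by `F₀ᴴ` kills all but the first,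
and by `F₁ᴴ` recovers the `B k`.
For the existence statement take `d = 3` with the depolarizing family `Eᵢⱼ / √3`, relabelling the
output space `Fin 2 × Fin 3` as `Fin 6`.
-/

theorem inv_sqrt_mul_inv_sqrt {x : ℝ} (hx : 0 ≤ x) :
    (Real.sqrt x : ℂ)⁻¹ * (Real.sqrt x : ℂ)⁻¹ = (x : ℂ)⁻¹ := by
  rw [← mul_inv, ← Complex.ofReal_mul, Real.mul_self_sqrt hx]

section Kraus
variable {n m ι : Type*} [Fintype n] [Fintype ι]

theorem krausMap_apply (A : ι → Matrix m n ℂ) (ρ : Matrix n n ℂ) :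
    krausMap A ρ = ∑ k, A k * ρ * (A k)ᴴ := rfl

theorem complementMap_apply [Fintype m] (A : ι → Matrix m n ℂ) (ρ : Matrix n n ℂ) (j k : ι) :
    complementMap A ρ j k = (A j * ρ * (A k)ᴴ).trace := rfl

theorem krausMap_smul (c : ℂ) (A : ι → Matrix m n ℂ) (ρ : Matrix n n ℂ) :
    krausMap (fun k => c • A k) ρ = (star c * c) • krausMap A ρ := by
  simp only [krausMap_apply, Finset.smul_sum, conjTranspose_smul, Matrix.smul_mul, Matrix.mul_smul,
    smul_smul]

theorem krausMap_mul_left {l : Type*} [Fintype m] (P : Matrix l m ℂ) (A : ι → Matrix m n ℂ)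
    (ρ : Matrix n n ℂ) : krausMap (fun k => P * A k) ρ = P * krausMap A ρ * Pᴴ := by
  simp only [krausMap_apply, Matrix.mul_sum, Matrix.sum_mul, conjTranspose_mul, Matrix.mul_assoc]

theorem krausMap_mul_right {l : Type*} [Fintype l] (A : ι → Matrix m n ℂ) (Q : Matrix n l ℂ)
    (ρ : Matrix l l ℂ) : krausMap (fun k => A k * Q) ρ = krausMap A (Q * ρ * Qᴴ) := by
  simp only [krausMap_apply, conjTranspose_mul, Matrix.mul_assoc]

theorem krausMap_sumElim {ι' : Type*} [Fintype ι'] (A : ι → Matrix m n ℂ)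
    (A' : ι' → Matrix m n ℂ) (ρ : Matrix n n ℂ) :
    krausMap (Sum.elim A A') ρ = krausMap A ρ + krausMap A' ρ :=
  Fintype.sum_sum_type _

theorem krausMap_single [DecidableEq n] [DecidableEq m] (a : m) (ρ : Matrix n n ℂ) :
    krausMap (fun i => single a i 1) ρ = single a a ρ.trace := by
  simp only [krausMap_apply, conjTranspose_single, star_one, single_mul_mul_single, one_mul,
    mul_one]
  exact (map_sum (singleAddMonoidHom a a : ℂ →+ Matrix m m ℂ) _ _).symm

variable [DecidableEq n]

def krausRows (A : ι → Matrix m n ℂ) : Matrix ι (n × m) ℂ :=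
  Matrix.of fun k p => star (A k p.2 p.1)

theorem choi_krausMap (A : ι → Matrix m n ℂ) :
    choi (krausMap A) = (krausRows A)ᴴ * krausRows A := by
  ext ⟨p, u⟩ ⟨q, v⟩
  simp [choi, krausMap_apply, krausRows, Matrix.sum_apply, mul_apply, single, ite_and]

variable [Fintype m]

theorem trace_krausMap {A : ι → Matrix m n ℂ} (hA : ∑ k, (A k)ᴴ * A k = 1)
    (ρ : Matrix n n ℂ) : (krausMap A ρ).trace = ρ.trace := by
  simp_rw [krausMap_apply, trace_sum, trace_mul_cycle (A _), ← trace_sum, ← Finset.sum_mul, hA,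
    Matrix.one_mul]

theorem isCPTP_krausMap {A : ι → Matrix m n ℂ}
    (hA : ∀ ρ, (krausMap A ρ).trace = ρ.trace) : IsCPTP (krausMap A) :=
  ⟨choi_krausMap A ▸ posSemidef_conjTranspose_mul_self _, hA⟩

theorem rank_choi_krausMap {A : ι → Matrix m n ℂ} (hA : LinearIndependent ℂ A) :
    (choi (krausMap A)).rank = Fintype.card ι := by
  let unflatten : (n × m → ℂ) →ₗ[ℂ] Matrix m n ℂ :=
    { toFun := fun w => Matrix.of fun i j => w (j, i)
      map_add' := fun _ _ => rfl
      map_smul' := fun _ _ => rfl }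
  have hunflatten : unflatten ∘ (krausRows A)ᴴ.col = A := by
    ext k i j
    exact star_star (A k i j)
  have hcols : LinearIndependent ℂ (krausRows A)ᴴ.col :=
    .of_comp unflatten (by rwa [hunflatten])
  rw [choi_krausMap, rank_conjTranspose_mul_self, ← rank_conjTranspose,
    rank_eq_finrank_span_cols, finrank_span_eq_card hcols]

end Kraus

section Complement
variable {n m ι : Type*} [Fintype n] [Fintype m] [Fintype ι]

/-- The Kraus operators `∑ₖ |k⟩⟨i| A k` of the complementary channel. -/
def complementKraus (A : ι → Matrix m n ℂ) (i : m) : Matrix ι n ℂ :=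
  Matrix.of fun k j => A k i j

theorem complementMap_eq_krausMap (A : ι → Matrix m n ℂ) :
    complementMap A = krausMap (complementKraus A) := by
  refine LinearMap.ext fun ρ => ?_
  ext j k
  simp only [complementMap_apply, krausMap_apply, Matrix.trace, diag, Matrix.sum_apply,
    mul_apply, complementKraus, of_apply, conjTranspose_apply]

theorem trace_complementMap (A : ι → Matrix m n ℂ) (ρ : Matrix n n ℂ) :
    (complementMap A ρ).trace = (krausMap A ρ).trace := by
  rw [krausMap_apply, trace_sum]
  rfl

end Complement

section Relabel
variable {n m m' ι : Type*}

theorem submatrix_mul_mul_conjTranspose_submatrix [Fintype n] (g : m' → m) (A B : Matrix m n ℂ)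
    (ρ : Matrix n n ℂ) :
    A.submatrix g id * ρ * (B.submatrix g id)ᴴ = (A * ρ * Bᴴ).submatrix g g := by
  ext x y
  simp [mul_apply]

theorem krausMap_submatrix_left [Fintype n] [Fintype ι] (g : m' → m) (A : ι → Matrix m n ℂ)
    (ρ : Matrix n n ℂ) :
    krausMap (fun k => (A k).submatrix g id) ρ = (krausMap A ρ).submatrix g g := by
  simp_rw [krausMap_apply, submatrix_mul_mul_conjTranspose_submatrix]
  ext x y
  simp [Matrix.sum_apply]

theorem LinearIndependent.submatrix_left (g : m' ≃ m) {A : ι → Matrix m n ℂ}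
    (hA : LinearIndependent ℂ A) : LinearIndependent ℂ fun k => (A k).submatrix g id := by
  simpa [Function.comp_def] using
    hA.map' (reindexLinearEquiv ℂ ℂ g.symm (.refl n)).toLinearMap (LinearEquiv.ker _)

theorem sum_conjTranspose_submatrix_left_mul_self [Fintype m] [Fintype m'] [Fintype ι] (g : m' ≃ m)
    (A : ι → Matrix m n ℂ) :
    ∑ k, ((A k).submatrix g id)ᴴ * (A k).submatrix g id = ∑ k, (A k)ᴴ * A k := by
  simp_rw [conjTranspose_submatrix, submatrix_mul_equiv, submatrix_id_id]

variable [Fintype n] [Fintype m] [Fintype m'] [Fintype ι] (g : m' ≃ m)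

theorem trace_submatrix_equiv (X : Matrix m m ℂ) : (X.submatrix g g).trace = X.trace :=
  Equiv.sum_comp g fun i => X i i

theorem complementMap_submatrix_left (A : ι → Matrix m n ℂ) :
    complementMap (fun k => (A k).submatrix g id) = complementMap A := by
  refine LinearMap.ext fun ρ => ?_
  ext j k
  rw [complementMap_apply, complementMap_apply, submatrix_mul_mul_conjTranspose_submatrix,
    trace_submatrix_equiv]

theorem krausMap_submatrix_right {l : Type*} (M : ι → Matrix l m ℂ) (σ : Matrix m m ℂ) :
    krausMap (fun k => (M k).submatrix id g) (σ.submatrix g g) = krausMap M σ := by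
  simp_rw [krausMap_apply, conjTranspose_submatrix, submatrix_mul_equiv, submatrix_id_id]

end Relabel

section IsDegradingKraus
variable {n m ι ε : Type*} [Fintype n] [Fintype m] [Fintype ι] [Fintype ε]

def IsDegradingKraus (M : ι → Matrix ε m ℂ) (A : ε → Matrix m n ℂ) : Prop :=
  (∀ σ, (krausMap M σ).trace = σ.trace) ∧ krausMap M ∘ₗ krausMap A = complementMap A

theorem IsDegradingKraus.degradable [DecidableEq n] [DecidableEq m] {e : ℕ}
    {M : ι → Matrix (Fin e) m ℂ} {A : Fin e → Matrix m n ℂ} (h : IsDegradingKraus M A)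
    (hA : ∑ k, (A k)ᴴ * A k = 1) : Degradable (krausMap A) :=
  ⟨e, A, ⟨fun _ => rfl, hA⟩, krausMap M, isCPTP_krausMap h.1, h.2⟩

theorem IsDegradingKraus.submatrix {m' : Type*} [Fintype m'] (g : m' ≃ m)
    {M : ι → Matrix ε m ℂ} {A : ε → Matrix m n ℂ} (h : IsDegradingKraus M A) :
    IsDegradingKraus (fun α => (M α).submatrix id g) (fun k => (A k).submatrix g id) := by
  refine ⟨fun σ => ?_, LinearMap.ext fun ρ => ?_⟩
  · obtain ⟨τ, rfl⟩ : ∃ τ, σ = τ.submatrix g g := ⟨σ.submatrix g.symm g.symm, by simp⟩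
    rw [krausMap_submatrix_right, h.1, trace_submatrix_equiv]
  · rw [LinearMap.comp_apply, krausMap_submatrix_left, krausMap_submatrix_right,
      complementMap_submatrix_left, ← h.2, LinearMap.comp_apply]

end IsDegradingKraus

section Flag
variable (n : Type*) [DecidableEq n]

/-- The isometry `|i⟩ ⊗ 𝟙 : ℂⁿ → ℂ² ⊗ ℂⁿ`. -/
def flag (i : Fin 2) : Matrix (Fin 2 × n) n ℂ :=
  Matrix.of fun p j => if p.1 = i ∧ p.2 = j then 1 else 0

variable [Fintype n]

theorem conjTranspose_flag_mul_flag (i j : Fin 2) :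
    (flag n i)ᴴ * flag n j = if i = j then 1 else 0 := by
  ext a b
  split_ifs with h
  · subst h
    simp [flag, mul_apply, one_apply, Fintype.sum_prod_type, ite_and, eq_comm]
  · simp [flag, mul_apply, Fintype.sum_prod_type, ite_and, Ne.symm h]

theorem sum_flag_mul_conjTranspose_flag : ∑ i, flag n i * (flag n i)ᴴ = 1 := by
  ext ⟨a, b⟩ ⟨a', b'⟩
  simp [flag, mul_apply, Matrix.sum_apply, one_apply, ite_and, Prod.ext_iff, eq_comm,
    apply_ite (starRingEnd ℂ)]

theorem conjTranspose_flag_mul_mul_flag (i : Fin 2) (X Y : Matrix n n ℂ) :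
    (flag n i)ᴴ * (flag n 0 * X * (flag n 0)ᴴ + flag n 1 * Y * (flag n 1)ᴴ) * flag n i =
      if i = 0 then X else Y := by
  have hassoc : ∀ j (Z : Matrix n n ℂ),
      (flag n i)ᴴ * (flag n j * Z * (flag n j)ᴴ) * flag n i =
        (flag n i)ᴴ * flag n j * Z * ((flag n j)ᴴ * flag n i) := by
    simp only [Matrix.mul_assoc, implies_true]
  rw [Matrix.mul_add, Matrix.add_mul, hassoc, hassoc]
  fin_cases i <;> simp [conjTranspose_flag_mul_flag]

end Flag

section SuccIsometry
variable (f : ℕ)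

def succIsometry : Matrix (Fin (f + 1)) (Fin f) ℂ :=
  Matrix.of fun i k => if i = k.succ then 1 else 0

theorem conjTranspose_succIsometry_mul_self : (succIsometry f)ᴴ * succIsometry f = 1 := by
  ext k l
  simp [succIsometry, mul_apply, one_apply, eq_comm]

variable {f} (X : Matrix (Fin f) (Fin f) ℂ)

theorem succIsometry_mul_mul_conjTranspose_apply_succ_succ (j k : Fin f) :
    (succIsometry f * X * (succIsometry f)ᴴ) j.succ k.succ = X j k := by
  simp [succIsometry, mul_apply]

theorem succIsometry_mul_mul_conjTranspose_apply_zero_left (k : Fin (f + 1)) :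
    (succIsometry f * X * (succIsometry f)ᴴ) 0 k = 0 := by
  simp [succIsometry, mul_apply, eq_comm (a := (0 : Fin (f + 1)))]

theorem succIsometry_mul_mul_conjTranspose_apply_zero_right (j : Fin (f + 1)) :
    (succIsometry f * X * (succIsometry f)ᴴ) j 0 = 0 := by
  simp [succIsometry, mul_apply, eq_comm (a := (0 : Fin (f + 1)))]

end SuccIsometry

section Flagged
variable {d f : ℕ} (B : Fin f → Matrix (Fin d) (Fin d) ℂ)

theorem bigA_zero : bigA B 0 = (Real.sqrt 2 : ℂ)⁻¹ • flag (Fin d) 0 := by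
  ext p j
  simp [bigA, flag]

theorem bigA_succ (k : Fin f) :
    bigA B k.succ = (Real.sqrt 2 : ℂ)⁻¹ • (flag (Fin d) 1 * B k) := by
  ext ⟨a, b⟩ j
  simp [bigA, flag, mul_apply, ite_and]

theorem krausMap_bigA (ρ : Matrix (Fin d) (Fin d) ℂ) :
    krausMap (bigA B) ρ = (2 : ℂ)⁻¹ • (flag (Fin d) 0 * ρ * (flag (Fin d) 0)ᴴ +
      flag (Fin d) 1 * krausMap B ρ * (flag (Fin d) 1)ᴴ) := by
  have htail : ∑ k : Fin f, bigA B k.succ * ρ * (bigA B k.succ)ᴴ =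
      krausMap (fun k => (Real.sqrt 2 : ℂ)⁻¹ • (flag (Fin d) 1 * B k)) ρ := by
    simp_rw [bigA_succ]
    rfl
  rw [krausMap_apply, Fin.sum_univ_succ, htail, krausMap_smul, krausMap_mul_left, bigA_zero]
  simp [conjTranspose_smul, Matrix.smul_mul, Matrix.mul_smul, smul_smul,
    inv_sqrt_mul_inv_sqrt zero_le_two]

theorem complementMap_bigA (ρ : Matrix (Fin d) (Fin d) ℂ) :
    complementMap (bigA B) ρ = (2 : ℂ)⁻¹ • (single 0 0 ρ.trace +
      succIsometry f * complementMap B ρ * (succIsometry f)ᴴ) := by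
  have hsq (x : ℂ) : (Real.sqrt 2 : ℂ)⁻¹ * ((Real.sqrt 2 : ℂ)⁻¹ * x) = 2⁻¹ * x := by
    rw [← mul_assoc, inv_sqrt_mul_inv_sqrt zero_le_two, Complex.ofReal_ofNat]
  ext j k
  induction j using Fin.cases <;> induction k using Fin.cases <;>
    simp only [Matrix.smul_apply, Matrix.add_apply,
      succIsometry_mul_mul_conjTranspose_apply_succ_succ,
      succIsometry_mul_mul_conjTranspose_apply_zero_left,
      succIsometry_mul_mul_conjTranspose_apply_zero_right] <;>
    simp [complementMap_apply, bigA_zero, bigA_succ, trace_mul_comm (flag (Fin d) _),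
      Matrix.mul_assoc, conjTranspose_flag_mul_flag, hsq, eq_comm (a := (0 : Fin (f + 1)))]

theorem sum_conjTranspose_bigA_mul_self (hB : ∑ k, (B k)ᴴ * B k = 1) :
    ∑ k, (bigA B k)ᴴ * bigA B k = 1 := by
  have hsq := inv_sqrt_mul_inv_sqrt zero_le_two
  rw [Fin.sum_univ_succ, bigA_zero]
  simp_rw [bigA_succ, conjTranspose_smul, conjTranspose_mul, Matrix.smul_mul, Matrix.mul_smul,
    smul_smul, Matrix.mul_assoc, ← Matrix.mul_assoc (flag (Fin d) 1)ᴴ,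
    conjTranspose_flag_mul_flag]
  simp [← Finset.smul_sum, hB, hsq, ← add_smul]
  norm_num

theorem linearIndependent_bigA (hd : 0 < d) (hB : LinearIndependent ℂ B) :
    LinearIndependent ℂ (bigA B) := by
  have hs : (Real.sqrt 2 : ℂ) ≠ 0 := by simp
  rw [← Fin.cons_self_tail (bigA B), linearIndependent_finCons]
  constructor
  · let recover := mulLeftLinearMap (Fin d) ℂ ((Real.sqrt 2 : ℂ) • (flag (Fin d) 1)ᴴ)
    have hrecover : recover ∘ Fin.tail (bigA B) = B := by
      funext k
      simp only [recover, Function.comp_apply, Fin.tail, bigA_succ, mulLeftLinearMap_apply,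
        Matrix.smul_mul, Matrix.mul_smul, smul_smul, ← Matrix.mul_assoc,
        conjTranspose_flag_mul_flag, if_true, Matrix.one_mul, inv_mul_cancel₀ hs, one_smul]
    exact .of_comp recover (by rwa [hrecover])
  · let detect := mulLeftLinearMap (Fin d) ℂ (flag (Fin d) 0)ᴴ
    have hspan : Submodule.span ℂ (Set.range (Fin.tail (bigA B))) ≤ LinearMap.ker detect := by
      rw [Submodule.span_le]
      rintro _ ⟨k, rfl⟩
      simp [detect, Fin.tail, bigA_succ, ← Matrix.mul_assoc, conjTranspose_flag_mul_flag]
    intro hmem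
    have : Nonempty (Fin d) := ⟨⟨0, hd⟩⟩
    simpa [detect, bigA_zero, conjTranspose_flag_mul_flag, hs] using hspan hmem

/-- The degrading map reads `tr ρ` off the `|1⟩` block and applies `Nᶜ` to the `|0⟩` block. -/
def degradingKraus : Fin d ⊕ Fin d → Matrix (Fin (f + 1)) (Fin 2 × Fin d) ℂ :=
  Sum.elim (fun i => single (0 : Fin (f + 1)) i (1 : ℂ) * (flag (Fin d) 1)ᴴ)
    (fun i => succIsometry f * complementKraus B i * (flag (Fin d) 0)ᴴ)

theorem krausMap_degradingKraus (σ : Matrix (Fin 2 × Fin d) (Fin 2 × Fin d) ℂ) :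
    krausMap (degradingKraus B) σ = single 0 0 ((flag (Fin d) 1)ᴴ * σ * flag (Fin d) 1).trace +
      succIsometry f * complementMap B ((flag (Fin d) 0)ᴴ * σ * flag (Fin d) 0) *
        (succIsometry f)ᴴ := by
  rw [degradingKraus, krausMap_sumElim, krausMap_mul_right, krausMap_single, krausMap_mul_right,
    krausMap_mul_left, complementMap_eq_krausMap, conjTranspose_conjTranspose,
    conjTranspose_conjTranspose]

theorem trace_krausMap_degradingKraus (hB : ∑ k, (B k)ᴴ * B k = 1)
    (σ : Matrix (Fin 2 × Fin d) (Fin 2 × Fin d) ℂ) :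
    (krausMap (degradingKraus B) σ).trace = σ.trace := by
  rw [krausMap_degradingKraus, trace_add, trace_single_eq_same, trace_mul_cycle (succIsometry f),
    conjTranspose_succIsometry_mul_self, Matrix.one_mul, trace_complementMap, trace_krausMap hB,
    trace_mul_cycle, trace_mul_cycle (flag (Fin d) 0)ᴴ, ← trace_add, ← Matrix.add_mul, add_comm,
    ← Fin.sum_univ_two (fun i => flag (Fin d) i * (flag (Fin d) i)ᴴ),
    sum_flag_mul_conjTranspose_flag, Matrix.one_mul]

theorem isDegradingKraus_degradingKraus (hB : ∑ k, (B k)ᴴ * B k = 1) :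
    IsDegradingKraus (degradingKraus B) (bigA B) := by
  refine ⟨trace_krausMap_degradingKraus B hB, LinearMap.ext fun ρ => ?_⟩
  rw [LinearMap.comp_apply, krausMap_degradingKraus, krausMap_bigA, complementMap_bigA]
  simp only [Matrix.mul_smul, Matrix.smul_mul, conjTranspose_flag_mul_mul_flag]
  simp [trace_krausMap hB, smul_add, smul_single]

end Flagged

section Depolarizing
variable (d : ℕ)

def sqEquiv : Fin (d ^ 2) ≃ Fin d × Fin d :=
  (finCongr (sq d)).trans finProdFinEquiv.symm

noncomputable def depolarizingKraus (k : Fin (d ^ 2)) : Matrix (Fin d) (Fin d) ℂ :=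
  (Real.sqrt d : ℂ)⁻¹ • single (sqEquiv d k).1 (sqEquiv d k).2 1

variable {d}

theorem sum_conjTranspose_depolarizingKraus_mul_self (hd : 0 < d) :
    ∑ k, (depolarizingKraus d k)ᴴ * depolarizingKraus d k = 1 := by
  have hterm (p : Fin d × Fin d) :
      (depolarizingKraus d ((sqEquiv d).symm p))ᴴ * depolarizingKraus d ((sqEquiv d).symm p) =
        (d : ℂ)⁻¹ • single p.2 p.2 1 := by
    simp only [depolarizingKraus, Equiv.apply_symm_apply, conjTranspose_smul, conjTranspose_single,
      Matrix.smul_mul, Matrix.mul_smul, smul_smul, single_mul_single_same, star_one, mul_one,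
      Complex.star_def, map_inv₀, Complex.conj_ofReal, inv_sqrt_mul_inv_sqrt (Nat.cast_nonneg d),
      Complex.ofReal_natCast]
  rw [← (sqEquiv d).symm.sum_comp, Finset.sum_congr rfl fun p _ => hterm p, ← Finset.smul_sum,
    Fintype.sum_prod_type]
  simp only [sum_single_one, Finset.sum_const, Finset.card_univ, Fintype.card_fin]
  rw [← Nat.cast_smul_eq_nsmul ℂ, smul_smul, inv_mul_cancel₀ (by exact_mod_cast hd.ne'),
    one_smul]

theorem linearIndependent_depolarizingKraus (hd : 0 < d) :
    LinearIndependent ℂ (depolarizingKraus d) := by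
  have hc : (Real.sqrt d : ℂ)⁻¹ ≠ 0 := by simp [hd.ne']
  convert ((stdBasis ℂ (Fin d) (Fin d)).linearIndependent.comp (sqEquiv d)
    (sqEquiv d).injective).units_smul fun _ => Units.mk0 _ hc using 1
  funext k
  simp only [depolarizingKraus, Function.comp_apply, Pi.smul_apply', Units.smul_mk0,
    ← stdBasis_eq_single, Prod.mk.eta]

end Depolarizing

/-- there exist degradable channels whose Choi rank exceeds the output
dimension; specifically, if `N` on `M_d` (`d ≥ 3`) has Choi rank `d²` (a linearly
independent Kraus family of size `d²`), the flagged channel is degradable with output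
dimension `2d` and Choi rank `d² + 1 > 2d`. -/
theorem degradable_with_large_environment :
    (∃ (a b : ℕ) (Φ : Matrix (Fin a) (Fin a) ℂ →ₗ[ℂ] Matrix (Fin b) (Fin b) ℂ),
      IsCPTP Φ ∧ Degradable Φ ∧ b < (choi Φ).rank) ∧
    ∀ (d : ℕ), 3 ≤ d → ∀ B : Fin (d ^ 2) → Matrix (Fin d) (Fin d) ℂ,
      (∑ k, (B k)ᴴ * B k = 1) → LinearIndependent ℂ B →
      Degradable (krausMap (bigA B)) ∧
      (choi (krausMap (bigA B))).rank = d ^ 2 + 1 ∧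
      2 * d < d ^ 2 + 1 := by
  constructor
  · let B := depolarizingKraus 3
    have hB : ∑ k, (B k)ᴴ * B k = 1 := sum_conjTranspose_depolarizingKraus_mul_self three_pos
    let g : Fin (2 * 3) ≃ Fin 2 × Fin 3 := finProdFinEquiv.symm
    let A := fun k => (bigA B k).submatrix g id
    have hA : ∑ k, (A k)ᴴ * A k = 1 := by
      rw [sum_conjTranspose_submatrix_left_mul_self, sum_conjTranspose_bigA_mul_self B hB]
    have hLI : LinearIndependent ℂ A :=
      (linearIndependent_bigA B three_pos
        (linearIndependent_depolarizingKraus three_pos)).submatrix_left g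
    refine ⟨3, 6, krausMap A, isCPTP_krausMap (trace_krausMap hA),
      ((isDegradingKraus_degradingKraus B hB).submatrix g).degradable hA, ?_⟩
    rw [rank_choi_krausMap hLI, Fintype.card_fin]
    norm_num
  · intro d hd B hB hLI
    refine ⟨(isDegradingKraus_degradingKraus B hB).degradable
      (sum_conjTranspose_bigA_mul_self B hB), ?_, by nlinarith⟩
    rw [rank_choi_krausMap (linearIndependent_bigA B (by omega) hLI), Fintype.card_fin]
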